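/- For W(x) = 1/(1+|x|/2) on ℝ³, define L₊ f := −Δf − 3|x|⁻¹ W² f and ΛW = (1/2)W + x·∇W. Then L₊(ΛW) = 0 pointwise for x ≠ 0. -/

import Mathlib

open scoped RealInnerProductSpace

noncomputable section

abbrev E3 := EuclideanSpace ℝ (Fin 3)

def W (x : E3) : ℝ := (1 + ‖x‖ / 2)⁻¹

def lap (f : E3 → ℝ) (x : E3) : ℝ :=
  ∑ i : Fin 3,
    fderiv ℝ (fun y => fderiv ℝ f y (EuclideanSpace.single i 1)) x (EuclideanSpace.single i 1)

/-- The linearized operator `L₊ f = -Δf - 3|x|⁻¹ W² f`. -/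
def Lplus (f : E3 → ℝ) (x : E3) : ℝ := -lap f x - 3 * ‖x‖⁻¹ * (W x) ^ 2 * f x

def Lam (f : E3 → ℝ) (x : E3) : ℝ := (1 / 2) * f x + ⟪x, gradient f x⟫

/-!
Both `W` and `Λ W` are radial, and for a radial function `φ (‖x‖)` on `ℝ³` the Laplacian at
`x ≠ 0` is `φ'' + (2 / r) φ'` with `r = ‖x‖`. The profile of `Λ W` is `u r = (2 - r) / (2 + r) ^ 2`,
so the claim reduces to the one-variable identity `u'' + (2 / r) u' + (3 / r) W(r)² u = 0`,
which is checked with `u' = (r - 6) / (2 + r) ^ 3` and `u'' = (20 - 2 r) / (2 + r) ^ 4`.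
-/

section Radial

variable {F : Type*} [NormedAddCommGroup F] [InnerProductSpace ℝ F]

theorem hasFDerivAt_norm_of_ne_zero {x : F} (hx : x ≠ 0) :
    HasFDerivAt (fun y : F => ‖y‖) (‖x‖⁻¹ • innerSL ℝ x) x := by
  have hsqrt := (hasStrictFDerivAt_norm_sq x).hasFDerivAt.sqrt (by positivity)
  simp only [Real.sqrt_sq (norm_nonneg _)] at hsqrt
  convert hsqrt using 1
  ext v
  simp only [smul_apply, smul_eq_mul, two_smul, add_apply]
  field_simp
  ring

theorem HasDerivAt.hasFDerivAt_comp_norm {φ : ℝ → ℝ} {d : ℝ} {x : F} (hx : x ≠ 0)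
    (hφ : HasDerivAt φ d ‖x‖) :
    HasFDerivAt (fun y : F => φ ‖y‖) ((d / ‖x‖) • innerSL ℝ x) x := by
  have h := hφ.comp_hasFDerivAt x (hasFDerivAt_norm_of_ne_zero hx)
  rwa [smul_smul, ← div_eq_mul_inv] at h

theorem inner_gradient_comp_norm [CompleteSpace F] {φ : ℝ → ℝ} {d : ℝ} {x : F} (hx : x ≠ 0)
    (hφ : HasDerivAt φ d ‖x‖) :
    ⟪x, gradient (fun y : F => φ ‖y‖) x⟫ = ‖x‖ * d := by
  rw [inner_gradient_right, (hφ.hasFDerivAt_comp_norm hx).fderiv]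
  simp only [smul_apply, innerSL_apply_apply, real_inner_self_eq_norm_sq, smul_eq_mul,
    conj_trivial]
  field_simp [norm_ne_zero_iff.mpr hx]

theorem fderiv_fderiv_comp_norm_apply {φ φ' : ℝ → ℝ} {φ'' : ℝ} {x : F} (hx : x ≠ 0)
    (hφ : ∀ s > 0, HasDerivAt φ (φ' s) s) (hφ' : HasDerivAt φ' φ'' ‖x‖) (v : F) :
    fderiv ℝ (fun y => fderiv ℝ (fun z : F => φ ‖z‖) y v) x v =
      (φ'' / ‖x‖ ^ 2 - φ' ‖x‖ / ‖x‖ ^ 3) * ⟪x, v⟫ ^ 2 + φ' ‖x‖ / ‖x‖ * ‖v‖ ^ 2 := by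
  have hr : ‖x‖ ≠ 0 := norm_ne_zero_iff.mpr hx
  have hdir : (fun y => fderiv ℝ (fun z : F => φ ‖z‖) y v) =ᶠ[nhds x]
      fun y => φ' ‖y‖ / ‖y‖ * ⟪v, y⟫ := by
    filter_upwards [isOpen_compl_singleton.mem_nhds hx] with y hy
    have hy : y ≠ 0 := hy
    rw [((hφ _ (norm_pos_iff.mpr hy)).hasFDerivAt_comp_norm hy).fderiv]
    simp [real_inner_comm]
  have hquot : HasDerivAt (fun s => φ' s / s) ((φ'' * ‖x‖ - φ' ‖x‖ * 1) / ‖x‖ ^ 2) ‖x‖ :=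
    hφ'.div (hasDerivAt_id _) hr
  have hprod : HasFDerivAt (fun y => φ' ‖y‖ / ‖y‖ * ⟪v, y⟫) _ x :=
    (hquot.hasFDerivAt_comp_norm hx).mul (innerSL ℝ v).hasFDerivAt
  rw [hdir.fderiv_eq, hprod.fderiv]
  simp only [add_apply, smul_apply, innerSL_apply_apply, smul_eq_mul,
    real_inner_self_eq_norm_sq, real_inner_comm x v]
  field_simp
  ring

end Radial

theorem lap_comp_norm {φ φ' : ℝ → ℝ} {φ'' : ℝ} {x : E3} (hx : x ≠ 0)
    (hφ : ∀ s > 0, HasDerivAt φ (φ' s) s) (hφ' : HasDerivAt φ' φ'' ‖x‖) :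
    lap (fun y => φ ‖y‖) x = φ'' + 2 / ‖x‖ * φ' ‖x‖ := by
  have hr : ‖x‖ ≠ 0 := norm_ne_zero_iff.mpr hx
  have hsum := EuclideanSpace.real_norm_sq_eq x
  simp only [lap, fderiv_fderiv_comp_norm_apply hx hφ hφ', EuclideanSpace.inner_single_right,
    PiLp.norm_single, norm_one, one_pow, mul_one, one_mul, conj_trivial] at hsum ⊢
  rw [Fin.sum_univ_three] at hsum ⊢
  field_simp
  linear_combination (φ' ‖x‖ - φ'' * ‖x‖) * hsum

theorem hasDerivAt_inv_one_add_half {r : ℝ} (hr : 2 + r ≠ 0) :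
    HasDerivAt (fun s : ℝ => (1 + s / 2)⁻¹) (-2 / (2 + r) ^ 2) r := by
  have hs : 1 + r / 2 ≠ 0 := by contrapose! hr; linarith
  refine ((((hasDerivAt_id' r).div_const 2).const_add 1).inv hs).congr_deriv ?_
  field_simp

theorem hasDerivAt_two_sub_div_two_add_sq {r : ℝ} (hr : 2 + r ≠ 0) :
    HasDerivAt (fun s : ℝ => (2 - s) / (2 + s) ^ 2) ((r - 6) / (2 + r) ^ 3) r := by
  refine (((hasDerivAt_id' r).const_sub 2).div (((hasDerivAt_id' r).const_add 2).fun_pow 2)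
    (pow_ne_zero 2 hr)).congr_deriv ?_
  field_simp
  ring

theorem hasDerivAt_sub_six_div_two_add_cube {r : ℝ} (hr : 2 + r ≠ 0) :
    HasDerivAt (fun s : ℝ => (s - 6) / (2 + s) ^ 3) ((20 - 2 * r) / (2 + r) ^ 4) r := by
  refine (((hasDerivAt_id' r).sub_const 6).div (((hasDerivAt_id' r).const_add 2).fun_pow 3)
    (pow_ne_zero 3 hr)).congr_deriv ?_
  field_simp
  ring

theorem Lam_W : Lam W = fun y => (2 - ‖y‖) / (2 + ‖y‖) ^ 2 := by
  funext y
  rcases eq_or_ne y 0 with rfl | hy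
  · norm_num [Lam, W]
  have hr : 2 + ‖y‖ ≠ 0 := by positivity
  unfold Lam W
  rw [inner_gradient_comp_norm hy (hasDerivAt_inv_one_add_half hr)]
  field_simp
  ring

theorem stmt_6 : ∀ x : E3, x ≠ 0 → Lplus (Lam W) x = 0 := by
  intro x hx
  have hr : 2 + ‖x‖ ≠ 0 := by positivity
  rw [Lplus, Lam_W, W, lap_comp_norm hx
    (fun s hs => hasDerivAt_two_sub_div_two_add_sq (by positivity))
    (hasDerivAt_sub_six_div_two_add_cube hr)]
  field_simp
  ring
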